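/- (One-step inequality for GraD, key step of Theorem 4.) Assume each f_i is convex and L-smooth (L > 0), f is μ-strongly convex with minimizer x*, and for each i there is y_i ∈ E with f_i(y_i) ≤ f_i(z) for all z (a global minimizer of f_i). Set D = (1/N)·∑_i ‖y_i − x*‖² and fix a cap Γ > 0. Fix x ∈ E, assume ḡ_s(x) ≠ 0 for every minibatch s, and let γ_s(x) = min{Γ, pgd_s(x)}. Suppose γmin > 0 satisfies μ·γmin ≤ 2·L and γ_s(x) ≥ γmin for every minibatch s. Then the average over all N^n minibatches s of ‖x − (1/(2L))·γ_s(x)·ḡ_s(x) − x*‖² is at most (1 − μ·γmin/(2·L))·‖x − x*‖² + 4·Γ·D. -/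

import Mathlib

open scoped BigOperators RealInnerProductSpace

open scoped RealInnerProductSpace
open InnerProductSpace

variable {F : Type*} [NormedAddCommGroup F] [InnerProductSpace ℝ F] [CompleteSpace F]

lemma inner_gradient_eq (f : F → ℝ) (x v : F) :
    ⟪gradient f x, v⟫ = fderiv ℝ f x v := by
  rw [gradient, toDual_symm_apply]

/-- derivative of the function t ↦ f (u + t • w) -/
lemma line_hasDerivAt (f : F → ℝ) (hf : Differentiable ℝ f) (u w : F) (t : ℝ) :
    HasDerivAt (fun t : ℝ => f (u + t • w)) ⟪gradient f (u + t • w), w⟫ t := by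
  have h1 : HasDerivAt (fun t : ℝ => u + t • w) w t := by
    simpa using ((hasDerivAt_id t).smul_const w).const_add u
  have h2 := ((hf (u + t • w)).hasFDerivAt).comp_hasDerivAt t h1
  rw [inner_gradient_eq]
  exact h2

/-- Convex differentiable function lies above its tangent. -/
lemma convex_grad_ineq (f : F → ℝ) (hf : Differentiable ℝ f)
    (hc : ConvexOn ℝ Set.univ f) (u v : F) :
    f u + ⟪gradient f u, v - u⟫ ≤ f v := by
  set w := v - u with hw
  have hd : HasDerivAt (fun t : ℝ => f (u + t • w)) ⟪gradient f u, w⟫ 0 := by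
    have := line_hasDerivAt f hf u w 0
    simpa using this
  have htend := hd.tendsto_slope_zero_right
  have hev : ∀ᶠ t in nhdsWithin (0:ℝ) (Set.Ioi 0),
      (t : ℝ)⁻¹ • (f (u + ((0:ℝ) + t) • w) - f (u + (0:ℝ) • w)) ≤ f v - f u := by
    filter_upwards [Ico_mem_nhdsGT_of_mem (by norm_num : (0:ℝ) ∈ Set.Ico (0:ℝ) 1),
      self_mem_nhdsWithin] with t ht ht0
    have ht0' : (0:ℝ) < t := ht0
    have ht1 : t ≤ 1 := le_of_lt ht.2
    have hcomb : f (u + t • w) ≤ (1 - t) * f u + t * f v := by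
      have := hc.2 (Set.mem_univ u) (Set.mem_univ v)
        (by linarith : (0:ℝ) ≤ 1 - t) (le_of_lt ht0') (by ring)
      have heq : (1 - t) • u + t • v = u + t • w := by
        rw [hw]; module
      rw [heq] at this
      simpa using this
    rw [smul_eq_mul]
    rw [inv_mul_le_iff₀ ht0']
    simp only [zero_smul, add_zero, zero_add]
    nlinarith
  have := le_of_tendsto htend hev
  linarith [this]

/-- Descent lemma for L-smooth functions. -/
lemma descent_lemma (f : F → ℝ) (hf : Differentiable ℝ f) (L : ℝ) (hL : 0 < L)
    (hlip : ∀ a b, ‖gradient f a - gradient f b‖ ≤ L * ‖a - b‖) (u v : F) :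
    f v ≤ f u + ⟪gradient f u, v - u⟫ + L / 2 * ‖v - u‖ ^ 2 := by
  set w := v - u with hw
  have hgc : Continuous (gradient f) := by
    have : LipschitzWith (Real.toNNReal L) (gradient f) := by
      apply LipschitzWith.of_dist_le_mul
      intro a b
      rw [dist_eq_norm, dist_eq_norm]
      calc ‖gradient f a - gradient f b‖ ≤ L * ‖a - b‖ := hlip a b
        _ = (Real.toNNReal L) * ‖a - b‖ := by
            rw [Real.coe_toNNReal L hL.le]
    exact this.continuous
  have hcont : Continuous (fun t : ℝ => ⟪gradient f (u + t • w), w⟫) := by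
    exact (hgc.comp (by continuity)).inner continuous_const
  have hkey : ∫ t in (0:ℝ)..1, ⟪gradient f (u + t • w), w⟫
      = f (u + (1:ℝ) • w) - f (u + (0:ℝ) • w) := by
    exact intervalIntegral.integral_eq_sub_of_hasDerivAt
      (f := fun t : ℝ => f (u + t • w))
      (fun t _ => line_hasDerivAt f hf u w t)
      (hcont.intervalIntegrable 0 1)
  have hbound : ∫ t in (0:ℝ)..1, ⟪gradient f (u + t • w), w⟫
      ≤ ∫ t in (0:ℝ)..1, (⟪gradient f u, w⟫ + L * ‖w‖ ^ 2 * t) := by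
    apply intervalIntegral.integral_mono_on (by norm_num)
    · exact hcont.intervalIntegrable 0 1
    · exact (by continuity : Continuous fun t : ℝ =>
        (⟪gradient f u, w⟫ + L * ‖w‖ ^ 2 * t)).intervalIntegrable 0 1
    · intro t ht
      have h1 : ⟪gradient f (u + t • w), w⟫ - ⟪gradient f u, w⟫
          = ⟪gradient f (u + t • w) - gradient f u, w⟫ := by
        rw [inner_sub_left]
      have h2 : ⟪gradient f (u + t • w) - gradient f u, w⟫
          ≤ ‖gradient f (u + t • w) - gradient f u‖ * ‖w‖ :=
        real_inner_le_norm _ _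
      have h3 : ‖gradient f (u + t • w) - gradient f u‖ ≤ L * (t * ‖w‖) := by
        have := hlip (u + t • w) u
        simpa [norm_smul, abs_of_nonneg ht.1] using this
      nlinarith [norm_nonneg w, ht.1]
  have hint : ∫ t in (0:ℝ)..1, (⟪gradient f u, w⟫ + L * ‖w‖ ^ 2 * t)
      = ⟪gradient f u, w⟫ + L * ‖w‖ ^ 2 / 2 := by
    rw [intervalIntegral.integral_add (intervalIntegrable_const)
      ((intervalIntegral.intervalIntegrable_id).const_mul _)]
    rw [intervalIntegral.integral_const_mul, integral_id]
    simp; ring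
  have h0 : f (u + (0:ℝ) • w) = f u := by simp
  have h1 : f (u + (1:ℝ) • w) = f v := by rw [hw]; simp
  rw [hkey, h0, h1] at hbound
  rw [hint] at hbound
  linarith

/-- Gradient norm squared bound via global minimum. -/
lemma grad_sq_le (f : F → ℝ) (hf : Differentiable ℝ f) (L : ℝ) (hL : 0 < L)
    (hlip : ∀ a b, ‖gradient f a - gradient f b‖ ≤ L * ‖a - b‖)
    (ym : F) (hym : ∀ z, f ym ≤ f z) (u : F) :
    ‖gradient f u‖ ^ 2 ≤ 2 * L * (f u - f ym) := by
  have h := descent_lemma f hf L hL hlip u (u - L⁻¹ • gradient f u)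
  have h2 : f ym ≤ f (u - L⁻¹ • gradient f u) := hym _
  have e1 : (u - L⁻¹ • gradient f u) - u = -(L⁻¹ • gradient f u) := by abel
  rw [e1] at h
  have e2 : ⟪gradient f u, -(L⁻¹ • gradient f u)⟫ = -(L⁻¹ * ‖gradient f u‖ ^ 2) := by
    rw [inner_neg_right, real_inner_smul_right, real_inner_self_eq_norm_sq]
  have e3 : ‖-(L⁻¹ • gradient f u)‖ ^ 2 = L⁻¹ ^ 2 * ‖gradient f u‖ ^ 2 := by
    rw [norm_neg, norm_smul]
    simp [abs_of_nonneg (inv_nonneg.2 hL.le), mul_pow]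
  rw [e2, e3] at h
  have hLne : L ≠ 0 := ne_of_gt hL
  have h4 : L⁻¹ * ‖gradient f u‖ ^ 2 - L / 2 * (L⁻¹ ^ 2 * ‖gradient f u‖ ^ 2)
      = ‖gradient f u‖ ^ 2 / (2 * L) := by
    field_simp; ring
  have h5 : ‖gradient f u‖ ^ 2 / (2 * L) ≤ f u - f ym := by linarith
  rw [div_le_iff₀ (by positivity : (0:ℝ) < 2 * L)] at h5
  linarith

/-- The gradient vanishes at a global minimum. -/
lemma gradient_min_eq_zero (f : F → ℝ) (hf : Differentiable ℝ f)
    (ym : F) (hym : ∀ z, f ym ≤ f z) : gradient f ym = 0 := by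
  have hmin : IsLocalMin f ym := by
    apply Filter.Eventually.of_forall
    exact hym
  have := hmin.fderiv_eq_zero
  rw [gradient, this, map_zero]

lemma sum_tuple_eval {M : Type*} [AddCommMonoid M] {N n : ℕ} (G : Fin N → M) (j : Fin n) :
    ∑ s : Fin n → Fin N, G (s j) = (N ^ (n - 1)) • ∑ i, G i := by
  classical
  have h := Fintype.sum_equiv (Equiv.funSplitAt j (Fin N))
    (fun s : Fin n → Fin N => G (s j)) (fun p => G p.1) (fun s => by simp)
  rw [h, Fintype.sum_prod_type]
  simp only [Finset.sum_const, Finset.card_univ]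
  rw [Fintype.card_fun]
  have hcard : Fintype.card {a : Fin n // a ≠ j} = n - 1 := by
    simp [Fintype.card_subtype_compl]
  rw [hcard]
  rw [Finset.smul_sum]
  exact Finset.sum_congr rfl fun i _ => by rw [Fintype.card_fin]

lemma avg_tuple {N n : ℕ} (hN : 1 ≤ N) (hn : 1 ≤ n) (r : Fin N → ℝ) :
    ((N : ℝ) ^ n)⁻¹ * ∑ s : Fin n → Fin N, ((n : ℝ)⁻¹ * ∑ j, r (s j))
      = (N : ℝ)⁻¹ * ∑ i, r i := by
  have hNpos : (0:ℝ) < N := by exact_mod_cast hN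
  have hnpos : (0:ℝ) < n := by exact_mod_cast hn
  rw [← Finset.mul_sum]
  rw [Finset.sum_comm]
  simp only [sum_tuple_eval]
  rw [Finset.sum_const, Finset.card_univ, Fintype.card_fin]
  have : (n : ℕ) • ((N ^ (n - 1)) • ∑ i, r i) = (n : ℝ) * ((N:ℝ) ^ (n - 1) * ∑ i, r i) := by
    simp [nsmul_eq_mul]
  rw [this]
  have hpow : (N : ℝ) ^ n = (N : ℝ) ^ (n - 1) * N := by
    conv_lhs => rw [show n = (n - 1) + 1 by omega]
    rw [pow_succ]
  rw [hpow]
  field_simp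

lemma gradient_avg {N : ℕ} (f : Fin N → F → ℝ) (hdiff : ∀ i, Differentiable ℝ (f i))
    (c : ℝ) (x : F) :
    gradient (fun z => c * ∑ i, f i z) x = c • ∑ i, gradient (f i) x := by
  have hds : DifferentiableAt ℝ (fun z => ∑ i, f i z) x :=
    DifferentiableAt.fun_sum fun i _ => (hdiff i).differentiableAt
  have h1 : fderiv ℝ (fun z => c * ∑ i, f i z) x
      = c • fderiv ℝ (fun z => ∑ i, f i z) x := fderiv_const_mul hds c
  have h2 : fderiv ℝ (fun z => ∑ i, f i z) x = ∑ i, fderiv ℝ (f i) x :=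
    fderiv_fun_sum fun i _ => (hdiff i).differentiableAt
  rw [gradient, h1, h2, map_smul, map_sum]
  rfl


set_option maxHeartbeats 800000 in
/-- One-step inequality for GraD (key step of Theorem 4). -/
theorem grad_one_step
    (d N n : ℕ) (hN : 1 ≤ N) (hn : 1 ≤ n)
    (f : Fin N → EuclideanSpace ℝ (Fin d) → ℝ)
    (hdiff : ∀ i, Differentiable ℝ (f i))
    (hconv : ∀ i, ConvexOn ℝ Set.univ (f i))
    (L : ℝ) (hL : 0 < L)
    (hsmooth : ∀ i (x y : EuclideanSpace ℝ (Fin d)),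
      ‖gradient (f i) x - gradient (f i) y‖ ≤ L * ‖x - y‖)
    (μ : ℝ) (hμ : 0 < μ)
    (xstar : EuclideanSpace ℝ (Fin d))
    (hsc : ∀ x y : EuclideanSpace ℝ (Fin d),
      (N : ℝ)⁻¹ * ∑ i, f i x
        + ⟪gradient (fun z => (N : ℝ)⁻¹ * ∑ i, f i z) x, y - x⟫
        + μ / 2 * ‖y - x‖ ^ 2 ≤ (N : ℝ)⁻¹ * ∑ i, f i y)
    (hmin : ∀ y, (N : ℝ)⁻¹ * ∑ i, f i xstar ≤ (N : ℝ)⁻¹ * ∑ i, f i y)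
    (y : Fin N → EuclideanSpace ℝ (Fin d))
    (hy : ∀ i (z : EuclideanSpace ℝ (Fin d)), f i (y i) ≤ f i z)
    (D : ℝ) (hD : D = (N : ℝ)⁻¹ * ∑ i, ‖y i - xstar‖ ^ 2)
    (Γ : ℝ) (hΓ : 0 < Γ)
    (g : (Fin n → Fin N) → EuclideanSpace ℝ (Fin d) → EuclideanSpace ℝ (Fin d))
    (hg : ∀ s x, g s x = (n : ℝ)⁻¹ • ∑ j, gradient (f (s j)) x)
    (γ : (Fin n → Fin N) → EuclideanSpace ℝ (Fin d) → ℝ)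
    (hγ : ∀ s x, γ s x
      = min Γ (((n : ℝ)⁻¹ * ∑ j, ‖gradient (f (s j)) x‖ ^ 2) / ‖g s x‖ ^ 2))
    (x : EuclideanSpace ℝ (Fin d))
    (hgne : ∀ s, g s x ≠ 0)
    (γmin : ℝ) (hγmin : 0 < γmin) (hμγ : μ * γmin ≤ 2 * L)
    (hlb : ∀ s, γmin ≤ γ s x) :
    ((N : ℝ) ^ n)⁻¹ * ∑ s : Fin n → Fin N,
        ‖x - ((2 * L)⁻¹ * γ s x) • g s x - xstar‖ ^ 2
      ≤ (1 - μ * γmin / (2 * L)) * ‖x - xstar‖ ^ 2 + 4 * Γ * D := by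
  have hη : (0:ℝ) < (2 * L)⁻¹ := by positivity
  have hLη : (2 * L)⁻¹ * (2 * L) = 1 := inv_mul_cancel₀ (by positivity)
  -- per-i facts
  have ha : ∀ i, 0 ≤ f i x - f i (y i) := fun i => by linarith [hy i x]
  have hb : ∀ i, 0 ≤ f i xstar - f i (y i) := fun i => by linarith [hy i xstar]
  have hgradsq : ∀ i, ‖gradient (f i) x‖ ^ 2 ≤ 2 * L * (f i x - f i (y i)) :=
    fun i => grad_sq_le (f i) (hdiff i) L hL (hsmooth i) (y i) (hy i) x
  have hbD : ∀ i, f i xstar - f i (y i) ≤ L / 2 * ‖y i - xstar‖ ^ 2 := by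
    intro i
    have h0 := gradient_min_eq_zero (f i) (hdiff i) (y i) (hy i)
    have hdl := descent_lemma (f i) (hdiff i) L hL (hsmooth i) (y i) xstar
    rw [h0, inner_zero_left, norm_sub_rev] at hdl
    linarith
  have hconvi : ∀ i, f i x - f i xstar ≤ ⟪gradient (f i) x, x - xstar⟫ := by
    intro i
    have h1 := convex_grad_ineq (f i) (hdiff i) (hconv i) x xstar
    have h2 : ⟪gradient (f i) x, xstar - x⟫ = -⟪gradient (f i) x, x - xstar⟫ := by
      rw [← inner_neg_right]
      congr 1
      abel
    rw [h2] at h1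
    linarith
  set r : Fin N → ℝ := fun i =>
    -(2 * ((2 * L)⁻¹ * γmin)) * ⟪gradient (f i) x, x - xstar⟫
      + (2 * L)⁻¹ * γmin * (f i x - f i (y i))
      + 2 * (2 * L)⁻¹ * Γ * (f i xstar - f i (y i)) with hr
  -- per-minibatch key inequality
  have key : ∀ s : Fin n → Fin N,
      ‖x - ((2 * L)⁻¹ * γ s x) • g s x - xstar‖ ^ 2
        ≤ ‖x - xstar‖ ^ 2 + (n : ℝ)⁻¹ * ∑ j, r (s j) := by
    intro s
    have hnpos : (0:ℝ) < n := by exact_mod_cast hn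
    set A : ℝ := (n : ℝ)⁻¹ * ∑ j, (f (s j) x - f (s j) (y (s j))) with hA
    set B : ℝ := (n : ℝ)⁻¹ * ∑ j, (f (s j) xstar - f (s j) (y (s j))) with hB
    set I : ℝ := (n : ℝ)⁻¹ * ∑ j, ⟪gradient (f (s j)) x, x - xstar⟫ with hI
    have hrsum : (n : ℝ)⁻¹ * ∑ j, r (s j)
        = -(2 * ((2 * L)⁻¹ * γmin)) * I + (2 * L)⁻¹ * γmin * A + 2 * (2 * L)⁻¹ * Γ * B := by
      rw [hA, hB, hI]
      simp only [hr]
      rw [Finset.sum_add_distrib, Finset.sum_add_distrib,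
        ← Finset.mul_sum, ← Finset.mul_sum, ← Finset.mul_sum]
      ring
    rw [hrsum]
    have hIg : ⟪g s x, x - xstar⟫ = I := by
      rw [hg, real_inner_smul_left, sum_inner, hI]
    have hA0 : 0 ≤ A := by
      rw [hA]
      exact mul_nonneg (by positivity) (Finset.sum_nonneg fun j _ => ha (s j))
    have hB0 : 0 ≤ B := by
      rw [hB]
      exact mul_nonneg (by positivity) (Finset.sum_nonneg fun j _ => hb (s j))
    have hG0 : (0:ℝ) < ‖g s x‖ ^ 2 := pow_pos (norm_pos_iff.mpr (hgne s)) 2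
    have hγΓ : γ s x ≤ Γ := by rw [hγ]; exact min_le_left _ _
    have hγm : γmin ≤ γ s x := hlb s
    have hγ0 : 0 < γ s x := lt_of_lt_of_le hγmin hγm
    have hγG : γ s x * ‖g s x‖ ^ 2 ≤ (n : ℝ)⁻¹ * ∑ j, ‖gradient (f (s j)) x‖ ^ 2 := by
      have h1 : γ s x ≤ ((n : ℝ)⁻¹ * ∑ j, ‖gradient (f (s j)) x‖ ^ 2) / ‖g s x‖ ^ 2 := by
        rw [hγ]; exact min_le_right _ _
      calc γ s x * ‖g s x‖ ^ 2
          ≤ (((n : ℝ)⁻¹ * ∑ j, ‖gradient (f (s j)) x‖ ^ 2) / ‖g s x‖ ^ 2) * ‖g s x‖ ^ 2 :=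
            mul_le_mul_of_nonneg_right h1 hG0.le
        _ = (n : ℝ)⁻¹ * ∑ j, ‖gradient (f (s j)) x‖ ^ 2 := div_mul_cancel₀ _ (ne_of_gt hG0)
    have hGA : (n : ℝ)⁻¹ * ∑ j, ‖gradient (f (s j)) x‖ ^ 2 ≤ 2 * L * A := by
      have h1 : ∑ j, ‖gradient (f (s j)) x‖ ^ 2
          ≤ ∑ j, 2 * L * (f (s j) x - f (s j) (y (s j))) :=
        Finset.sum_le_sum fun j _ => hgradsq (s j)
      have h2 : 2 * L * A = (n : ℝ)⁻¹ * ∑ j, 2 * L * (f (s j) x - f (s j) (y (s j))) := by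
        rw [hA, Finset.mul_sum, Finset.mul_sum, Finset.mul_sum]
        exact Finset.sum_congr rfl fun j _ => by ring
      rw [h2]
      exact mul_le_mul_of_nonneg_left h1 (by positivity)
    have hIlb : A - B ≤ I := by
      rw [hA, hB, hI, ← mul_sub, ← Finset.sum_sub_distrib]
      apply mul_le_mul_of_nonneg_left _ (by positivity : (0:ℝ) ≤ (n:ℝ)⁻¹)
      apply Finset.sum_le_sum
      intro j _
      have := hconvi (s j)
      linarith
    -- expansion of the squared norm
    have hexp : ‖x - ((2 * L)⁻¹ * γ s x) • g s x - xstar‖ ^ 2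
        = ‖x - xstar‖ ^ 2 - 2 * (((2 * L)⁻¹ * γ s x) * I)
          + ((2 * L)⁻¹ * γ s x) ^ 2 * ‖g s x‖ ^ 2 := by
      have e1 : x - ((2 * L)⁻¹ * γ s x) • g s x - xstar
          = (x - xstar) - ((2 * L)⁻¹ * γ s x) • g s x := by abel
      have hIg' : ⟪x - xstar, g s x⟫ = I := by rw [real_inner_comm]; exact hIg
      rw [e1, norm_sub_sq_real, real_inner_smul_right, hIg', norm_smul, Real.norm_eq_abs, mul_pow, sq_abs]
      try ring
    rw [hexp]
    -- scalar inequality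
    have hq : ((2 * L)⁻¹) ^ 2 * γ s x * (γ s x * ‖g s x‖ ^ 2)
        ≤ ((2 * L)⁻¹) ^ 2 * γ s x * (2 * L * A) :=
      mul_le_mul_of_nonneg_left (hγG.trans hGA) (by positivity)
    have hq2 : ((2 * L)⁻¹) ^ 2 * γ s x * (2 * L * A) = (2 * L)⁻¹ * γ s x * A := by
      have : ((2 * L)⁻¹) ^ 2 * γ s x * (2 * L * A)
          = ((2 * L)⁻¹ * (2 * L)) * ((2 * L)⁻¹ * γ s x * A) := by ring
      rw [this, hLη, one_mul]
    have hq3 : ((2 * L)⁻¹ * γ s x) ^ 2 * ‖g s x‖ ^ 2 ≤ (2 * L)⁻¹ * γ s x * A := by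
      calc ((2 * L)⁻¹ * γ s x) ^ 2 * ‖g s x‖ ^ 2
          = ((2 * L)⁻¹) ^ 2 * γ s x * (γ s x * ‖g s x‖ ^ 2) := by ring
        _ ≤ ((2 * L)⁻¹) ^ 2 * γ s x * (2 * L * A) := hq
        _ = (2 * L)⁻¹ * γ s x * A := hq2
    have hc : 2 * (2 * L)⁻¹ * (γ s x - γmin) * (A - B)
        ≤ 2 * (2 * L)⁻¹ * (γ s x - γmin) * I :=
      mul_le_mul_of_nonneg_left hIlb
        (mul_nonneg (by positivity) (by linarith))
    have hp1 : 0 ≤ (2 * L)⁻¹ * (γ s x - γmin) * A :=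
      mul_nonneg (mul_nonneg hη.le (by linarith)) hA0
    have hp2 : 0 ≤ (2 * L)⁻¹ * (Γ - (γ s x - γmin)) * B :=
      mul_nonneg (mul_nonneg hη.le (by linarith)) hB0
    ring_nf at hq3 hc hp1 hp2 ⊢
    linarith [hq3, hc, hp1, hp2]
  -- averaging over minibatches
  have hNpos : (0:ℝ) < N := by exact_mod_cast hN
  have hNpow : (0:ℝ) < (N:ℝ) ^ n := pow_pos hNpos n
  have main1 : ((N : ℝ) ^ n)⁻¹ * ∑ s : Fin n → Fin N,
        ‖x - ((2 * L)⁻¹ * γ s x) • g s x - xstar‖ ^ 2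
      ≤ ‖x - xstar‖ ^ 2 + (N : ℝ)⁻¹ * ∑ i, r i := by
    have h1 : ∑ s : Fin n → Fin N, ‖x - ((2 * L)⁻¹ * γ s x) • g s x - xstar‖ ^ 2
        ≤ ∑ s : Fin n → Fin N, (‖x - xstar‖ ^ 2 + (n : ℝ)⁻¹ * ∑ j, r (s j)) :=
      Finset.sum_le_sum fun s _ => key s
    have h2 := mul_le_mul_of_nonneg_left h1 (inv_nonneg.2 hNpow.le)
    refine h2.trans_eq ?_
    rw [Finset.sum_add_distrib, Finset.sum_const, Finset.card_univ, mul_add]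
    congr 1
    · simp only [Fintype.card_fun, Fintype.card_fin, nsmul_eq_mul]
      push_cast
      field_simp
    · exact avg_tuple hN hn r
  refine main1.trans ?_
  -- identify the averaged quantities
  have hSI : (N : ℝ)⁻¹ * ∑ i, r i
      = -(2 * ((2 * L)⁻¹ * γmin)) * ((N : ℝ)⁻¹ * ∑ i, ⟪gradient (f i) x, x - xstar⟫)
        + (2 * L)⁻¹ * γmin * ((N : ℝ)⁻¹ * ∑ i, (f i x - f i (y i)))
        + 2 * (2 * L)⁻¹ * Γ * ((N : ℝ)⁻¹ * ∑ i, (f i xstar - f i (y i))) := by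
    simp only [hr]
    rw [Finset.sum_add_distrib, Finset.sum_add_distrib,
      ← Finset.mul_sum, ← Finset.mul_sum, ← Finset.mul_sum]
    ring
  rw [hSI]
  set SI : ℝ := (N : ℝ)⁻¹ * ∑ i, ⟪gradient (f i) x, x - xstar⟫ with hSIdef
  set Fx : ℝ := (N : ℝ)⁻¹ * ∑ i, f i x with hFxdef
  set Fs : ℝ := (N : ℝ)⁻¹ * ∑ i, f i xstar with hFsdef
  set Fy : ℝ := (N : ℝ)⁻¹ * ∑ i, f i (y i) with hFydef
  have hsplit1 : (N : ℝ)⁻¹ * ∑ i, (f i x - f i (y i)) = Fx - Fy := by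
    rw [Finset.sum_sub_distrib, mul_sub]
  have hsplit2 : (N : ℝ)⁻¹ * ∑ i, (f i xstar - f i (y i)) = Fs - Fy := by
    rw [Finset.sum_sub_distrib, mul_sub]
  rw [hsplit1, hsplit2]
  have hscx : Fx - Fs + μ / 2 * ‖x - xstar‖ ^ 2 ≤ SI := by
    have h := hsc x xstar
    have hgr : gradient (fun z => (N : ℝ)⁻¹ * ∑ i, f i z) x
        = (N : ℝ)⁻¹ • ∑ i, gradient (f i) x := gradient_avg f hdiff _ x
    rw [hgr] at h
    have h2 : ⟪(N : ℝ)⁻¹ • ∑ i, gradient (f i) x, xstar - x⟫ = -SI := by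
      rw [real_inner_smul_left, sum_inner]
      have e : ∀ i : Fin N, ⟪gradient (f i) x, xstar - x⟫
          = -⟪gradient (f i) x, x - xstar⟫ := by
        intro i
        rw [← inner_neg_right]
        congr 1
        abel
      rw [Finset.sum_congr rfl fun i _ => e i, Finset.sum_neg_distrib, hSIdef]
      ring
    rw [h2, norm_sub_rev xstar x] at h
    linarith
  have hFxFs : Fs ≤ Fx := hmin x
  have hSB0 : 0 ≤ Fs - Fy := by
    rw [← hsplit2]
    exact mul_nonneg (by positivity) (Finset.sum_nonneg fun i _ => hb i)
  have hSB : Fs - Fy ≤ L / 2 * D := by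
    have h1 : ∑ i, (f i xstar - f i (y i)) ≤ ∑ i, L / 2 * ‖y i - xstar‖ ^ 2 :=
      Finset.sum_le_sum fun i _ => hbD i
    calc Fs - Fy = (N : ℝ)⁻¹ * ∑ i, (f i xstar - f i (y i)) := hsplit2.symm
      _ ≤ (N : ℝ)⁻¹ * ∑ i, L / 2 * ‖y i - xstar‖ ^ 2 :=
          mul_le_mul_of_nonneg_left h1 (by positivity)
      _ = L / 2 * D := by
          rw [hD, ← Finset.mul_sum]
          ring
  have hD0 : 0 ≤ D := by
    rw [hD]
    positivity
  have hγminΓ : γmin ≤ Γ := by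
    refine (hlb (fun _ => ⟨0, hN⟩)).trans ?_
    rw [hγ]
    exact min_le_left _ _
  have t1 := mul_le_mul_of_nonneg_left hscx
    (by positivity : (0:ℝ) ≤ 2 * ((2 * L)⁻¹ * γmin))
  have t2 : 0 ≤ (2 * L)⁻¹ * γmin * (Fx - Fs) :=
    mul_nonneg (mul_nonneg hη.le hγmin.le) (by linarith)
  have t3 : (2 * L)⁻¹ * γmin * (Fs - Fy) ≤ (2 * L)⁻¹ * Γ * (Fs - Fy) :=
    mul_le_mul_of_nonneg_right (mul_le_mul_of_nonneg_left hγminΓ hη.le) hSB0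
  have t4 : (2 * L)⁻¹ * Γ * (Fs - Fy) ≤ (2 * L)⁻¹ * Γ * (L / 2 * D) :=
    mul_le_mul_of_nonneg_left hSB (by positivity)
  have e4 : (2 * L)⁻¹ * Γ * (L / 2 * D) = 1 / 4 * (Γ * D) := by
    field_simp
    ring
  have hΓD : 0 ≤ Γ * D := mul_nonneg hΓ.le hD0
  ring_nf at t1 t2 t3 t4 e4 ⊢
  linarith [t1, t2, t3, t4, e4, hΓD]
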